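/- arXiv:2409.07216 — 4 statements merged into one kernel-verified Lean document; each statement's English description precedes it below -/
import Mathlib

section
/- Let $a, b \ge 0$ be integers and $(A_i, B_i)_{i \in I}$ a finite collection of pairs of finite sets such that $|A_i| = a$, $|B_i| = b$, $A_i \cap B_i = \emptyset$ for all $i$, and $A_i \cap B_j \ne \emptyset$ for all $i \ne j$. Then $|I| \le \binom{a+b}{a}$. -/
open Finset

private noncomputable def rhoFun (a b : ℕ) (S : Finset (Fin (a + b))) : Equiv.Perm (Fin (a + b)) :=
  if h : S.card = a then
    have hc : Sᶜ.card = b := by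
      rw [Finset.card_compl, h, Fintype.card_fin]; omega
    finSumFinEquiv.symm.trans
      ((Equiv.sumCongr (S.orderIsoOfFin h).toEquiv ((Sᶜ).orderIsoOfFin hc).toEquiv).trans
        ((Equiv.sumCongr (Equiv.refl _) (Equiv.subtypeEquivRight (fun x => Finset.mem_compl))).trans
          (Equiv.sumCompl (· ∈ S))))
  else Equiv.refl _

private lemma rhoFun_mem (a b : ℕ) (S : Finset (Fin (a + b))) (h : S.card = a) (k : Fin (a + b)) :
    rhoFun a b S k ∈ S ↔ (k : ℕ) < a := by
  rw [rhoFun, dif_pos h]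
  rcases hk : finSumFinEquiv.symm k with l | r
  · have hkl : (k : ℕ) = (l : ℕ) := by
      have : k = finSumFinEquiv (Sum.inl l) := by rw [← hk, Equiv.apply_symm_apply]
      rw [this, finSumFinEquiv_apply_left]; rfl
    simp [Equiv.trans_apply, hk, Equiv.sumCompl, hkl, Finset.coe_mem, l.isLt]
  · have hkr : (k : ℕ) = a + (r : ℕ) := by
      have : k = finSumFinEquiv (Sum.inr r) := by rw [← hk, Equiv.apply_symm_apply]
      rw [this, finSumFinEquiv_apply_right]; rfl
    have hmem : ((Sᶜ.orderIsoOfFin (by rw [Finset.card_compl, h, Fintype.card_fin]; omega)) r : Fin (a+b)) ∈ Sᶜ :=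
      Finset.coe_mem _
    rw [Finset.mem_compl] at hmem
    simp only [Equiv.trans_apply, hk, Equiv.sumCongr_apply, Sum.map_inr, Equiv.sumCompl]
    simp only [Equiv.coe_fn_mk, Sum.elim_inr]
    constructor
    · intro hmem2; exact absurd hmem2 (by simpa using hmem)
    · intro hlt; omega

private lemma rhoFun_symm_lt (a b : ℕ) (S : Finset (Fin (a + b))) (h : S.card = a)
    (k : Fin (a + b)) : ((rhoFun a b S).symm k : ℕ) < a ↔ k ∈ S := by
  have := rhoFun_mem a b S h ((rhoFun a b S).symm k)
  rw [Equiv.apply_symm_apply] at this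
  exact this.symm

private noncomputable def piFun (a b n : ℕ) (T : Finset (Fin n)) (S : Finset (Fin (a + b))) :
    Equiv.Perm (Fin n) :=
  if h : T.card = a + b then
    Equiv.Perm.extendDomain (rhoFun a b S).symm (T.orderIsoOfFin h).toEquiv
  else Equiv.refl _

private lemma bollobas_key {V : Type*} [Fintype V] [DecidableEq V] (a b n : ℕ)
    (A B : Finset V) (hA : A.card = a) (hB : B.card = b) (hAB : Disjoint A B)
    (E : Finset (V ↪ Fin n))
    (hE : ∀ f : V ↪ Fin n, (∀ x ∈ A, ∀ y ∈ B, f x < f y) → f ∈ E) :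
    Fintype.card (V ↪ Fin n) ≤ (a + b).choose a * E.card := by
  classical
  set T : (V ↪ Fin n) → Finset (Fin n) := fun f => (A ∪ B).image f with hTdef
  have hT : ∀ f, (T f).card = a + b := by
    intro f
    rw [hTdef]
    rw [Finset.card_image_of_injective _ f.injective, Finset.card_union_of_disjoint hAB, hA, hB]
  set S : (V ↪ Fin n) → Finset (Fin (a + b)) :=
    fun f => univ.filter (fun k => (((T f).orderIsoOfFin (hT f)) k : Fin n) ∈ A.image f) with hSdef
  have hAT : ∀ f : V ↪ Fin n, A.image f ⊆ T f := fun f => Finset.image_subset_image subset_union_left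
  have hS : ∀ f, (S f).card = a := by
    intro f
    have hinj : Function.Injective
        (fun k : Fin (a + b) => (((T f).orderIsoOfFin (hT f)) k : Fin n)) := by
      intro k l hkl
      exact ((T f).orderIsoOfFin (hT f)).injective (Subtype.ext hkl)
    have himg : (S f).image (fun k : Fin (a + b) => (((T f).orderIsoOfFin (hT f)) k : Fin n))
        = A.image f := by
      ext t
      simp only [Finset.mem_image, hSdef, Finset.mem_filter, Finset.mem_univ, true_and]
      constructor
      · rintro ⟨k, hk, rfl⟩; exact hk
      · intro ht
        refine ⟨((T f).orderIsoOfFin (hT f)).symm ⟨t, hAT f (Finset.mem_image.mpr ht)⟩, ?_, ?_⟩ <;>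
          simp [OrderIso.apply_symm_apply, ht]
    have h1 : (S f).card = (A.image f).card := by
      rw [← himg, Finset.card_image_of_injective _ hinj]
    rw [h1, Finset.card_image_of_injective A f.injective, hA]
  -- the sorted embedding belongs to E
  set g : (V ↪ Fin n) → (V ↪ Fin n) :=
    fun f => f.trans (piFun a b n (T f) (S f)).toEmbedding with hgdef
  have hpi : ∀ f, piFun a b n (T f) (S f)
      = Equiv.Perm.extendDomain (rhoFun a b (S f)).symm ((T f).orderIsoOfFin (hT f)).toEquiv := by
    intro f; rw [piFun, dif_pos (hT f)]
  have hπT : ∀ f, ∀ k : Fin (a + b),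
      (piFun a b n (T f) (S f)) (((T f).orderIsoOfFin (hT f)) k : Fin n)
        = (((T f).orderIsoOfFin (hT f)) ((rhoFun a b (S f)).symm k) : Fin n) := by
    intro f k
    rw [hpi f]
    exact Equiv.Perm.extendDomain_apply_image _ _ k
  have hgE : ∀ f, g f ∈ E := by
    intro f
    apply hE
    intro x hx y hy
    have hxT : f x ∈ T f := Finset.mem_image_of_mem f (Finset.mem_union_left _ hx)
    have hyT : f y ∈ T f := Finset.mem_image_of_mem f (Finset.mem_union_right _ hy)
    set kx := ((T f).orderIsoOfFin (hT f)).symm ⟨f x, hxT⟩ with hkx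
    set ky := ((T f).orderIsoOfFin (hT f)).symm ⟨f y, hyT⟩ with hky
    have hfx : (((T f).orderIsoOfFin (hT f)) kx : Fin n) = f x := by
      rw [hkx, OrderIso.apply_symm_apply]
    have hfy : (((T f).orderIsoOfFin (hT f)) ky : Fin n) = f y := by
      rw [hky, OrderIso.apply_symm_apply]
    have hkxS : kx ∈ S f := by
      simp only [hSdef, Finset.mem_filter, Finset.mem_univ, true_and, hfx]
      exact Finset.mem_image_of_mem f hx
    have hkyS : ky ∉ S f := by
      simp only [hSdef, Finset.mem_filter, Finset.mem_univ, true_and, hfy]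
      intro hmem
      obtain ⟨z, hz, hz2⟩ := Finset.mem_image.mp hmem
      have : z = y := f.injective hz2
      subst this
      exact (Finset.disjoint_left.mp hAB hz) hy
    have hltx : ((rhoFun a b (S f)).symm kx : ℕ) < a := (rhoFun_symm_lt a b _ (hS f) kx).mpr hkxS
    have hlty : ¬ ((rhoFun a b (S f)).symm ky : ℕ) < a := fun h =>
      hkyS ((rhoFun_symm_lt a b _ (hS f) ky).mp h)
    have hlt : (rhoFun a b (S f)).symm kx < (rhoFun a b (S f)).symm ky := by
      rw [Fin.lt_def]; omega
    have : (g f) x = (((T f).orderIsoOfFin (hT f)) ((rhoFun a b (S f)).symm kx) : Fin n) := by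
      simp only [hgdef, Function.Embedding.trans_apply, Equiv.coe_toEmbedding]
      rw [← hfx, hπT f kx]
    rw [this]
    have : (g f) y = (((T f).orderIsoOfFin (hT f)) ((rhoFun a b (S f)).symm ky) : Fin n) := by
      simp only [hgdef, Function.Embedding.trans_apply, Equiv.coe_toEmbedding]
      rw [← hfy, hπT f ky]
    rw [this]
    exact (((T f).orderIsoOfFin (hT f)).lt_iff_lt.mpr hlt)
  -- T is preserved and recovered
  have hTg : ∀ f, T (g f) = T f := by
    intro f
    have hsub : T (g f) ⊆ T f := by
      intro t ht
      rw [hTdef] at ht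
      obtain ⟨z, hz, rfl⟩ := Finset.mem_image.mp ht
      have hzT : f z ∈ T f := Finset.mem_image_of_mem f hz
      set k := ((T f).orderIsoOfFin (hT f)).symm ⟨f z, hzT⟩ with hk
      have hfz : (((T f).orderIsoOfFin (hT f)) k : Fin n) = f z := by
        rw [hk, OrderIso.apply_symm_apply]
      have : (g f) z = (((T f).orderIsoOfFin (hT f)) ((rhoFun a b (S f)).symm k) : Fin n) := by
        simp only [hgdef, Function.Embedding.trans_apply, Equiv.coe_toEmbedding]
        rw [← hfz, hπT f k]
      rw [this]
      exact Finset.coe_mem _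
    exact Finset.eq_of_subset_of_card_le hsub (by rw [hT, hT])
  have hSg : ∀ f, S (g f) = S f → True := fun _ _ => trivial
  -- injectivity of f ↦ (S f, g f)
  have hinjOn : Set.InjOn (fun f => (S f, g f)) ↑(univ : Finset (V ↪ Fin n)) := by
    intro f _ f' _ h
    have h1 : S f = S f' := congrArg Prod.fst h
    have h2 : g f = g f' := congrArg Prod.snd h
    have hTT : T f = T f' := by
      rw [← hTg f, ← hTg f', h2]
    have hππ : piFun a b n (T f) (S f) = piFun a b n (T f') (S f') := by rw [hTT, h1]
    apply DFunLike.ext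
    intro x
    have := DFunLike.congr_fun h2 x
    simp only [hgdef, Function.Embedding.trans_apply, Equiv.coe_toEmbedding] at this
    rw [hππ] at this
    exact (piFun a b n (T f') (S f')).injective this
  have hmaps : ∀ f ∈ (univ : Finset (V ↪ Fin n)),
      (S f, g f) ∈ (Finset.powersetCard a (univ : Finset (Fin (a + b)))) ×ˢ E := by
    intro f _
    rw [Finset.mem_product]
    exact ⟨Finset.mem_powersetCard.mpr ⟨Finset.subset_univ _, hS f⟩, hgE f⟩
  calc Fintype.card (V ↪ Fin n) = (univ : Finset (V ↪ Fin n)).card := (Finset.card_univ).symm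
    _ ≤ ((Finset.powersetCard a (univ : Finset (Fin (a + b)))) ×ˢ E).card :=
        Finset.card_le_card_of_injOn _ hmaps hinjOn
    _ = (a + b).choose a * E.card := by
        rw [Finset.card_product, Finset.card_powersetCard, Finset.card_univ, Fintype.card_fin]

/-- Bollobás Two Families Theorem. -/
theorem bollobas_two_families (a b : ℕ) {ι : Type*} [Fintype ι]
    (A B : ι → Finset ℕ)
    (hA : ∀ i, (A i).card = a) (hB : ∀ i, (B i).card = b)
    (hdisj : ∀ i, Disjoint (A i) (B i))
    (hcross : ∀ i j, i ≠ j → (A i ∩ B j).Nonempty) :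
    Fintype.card ι ≤ (a + b).choose a := by
  classical
  set U : Finset ℕ := Finset.univ.biUnion (fun i => A i ∪ B i) with hUdef
  have hAU : ∀ i, A i ⊆ U := fun i x hx =>
    Finset.mem_biUnion.mpr ⟨i, Finset.mem_univ i, Finset.mem_union_left _ hx⟩
  have hBU : ∀ i, B i ⊆ U := fun i x hx =>
    Finset.mem_biUnion.mpr ⟨i, Finset.mem_univ i, Finset.mem_union_right _ hx⟩
  set n := U.card with hn
  set A' : ι → Finset {x // x ∈ U} := fun i => (A i).subtype (· ∈ U) with hA'def
  set B' : ι → Finset {x // x ∈ U} := fun i => (B i).subtype (· ∈ U) with hB'def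
  have hA' : ∀ i, (A' i).card = a := fun i => by
    rw [hA'def, Finset.card_subtype, Finset.filter_true_of_mem (fun x hx => hAU i hx), hA]
  have hB' : ∀ i, (B' i).card = b := fun i => by
    rw [hB'def, Finset.card_subtype, Finset.filter_true_of_mem (fun x hx => hBU i hx), hB]
  have hdisj' : ∀ i, Disjoint (A' i) (B' i) := fun i => by
    rw [Finset.disjoint_left]
    intro x hx hx'
    rw [hA'def, Finset.mem_subtype] at hx
    rw [hB'def, Finset.mem_subtype] at hx'
    exact Finset.disjoint_left.mp (hdisj i) hx hx'
  set E : ι → Finset ({x // x ∈ U} ↪ Fin n) :=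
    fun i => Finset.univ.filter (fun f => ∀ x ∈ A' i, ∀ y ∈ B' i, f x < f y) with hEdef
  have hEdisj : ∀ i ∈ (Finset.univ : Finset ι), ∀ j ∈ (Finset.univ : Finset ι), i ≠ j →
      Disjoint (E i) (E j) := by
    intro i _ j _ hij
    rw [Finset.disjoint_left]
    intro f hfi hfj
    obtain ⟨x, hx⟩ := hcross i j hij
    obtain ⟨y, hy⟩ := hcross j i hij.symm
    rw [Finset.mem_inter] at hx hy
    have hxU : x ∈ U := hAU i hx.1
    have hyU : y ∈ U := hBU i hy.2
    rw [hEdef, Finset.mem_filter] at hfi hfj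
    have h1 : f ⟨x, hxU⟩ < f ⟨y, hyU⟩ := hfi.2 ⟨x, hxU⟩ (Finset.mem_subtype.mpr hx.1)
      ⟨y, hyU⟩ (Finset.mem_subtype.mpr hy.2)
    have h2 : f ⟨y, hyU⟩ < f ⟨x, hxU⟩ := hfj.2 ⟨y, hyU⟩ (Finset.mem_subtype.mpr hy.1)
      ⟨x, hxU⟩ (Finset.mem_subtype.mpr hx.2)
    exact absurd h2 (lt_asymm h1)
  have hkey : ∀ i, Fintype.card ({x // x ∈ U} ↪ Fin n) ≤ (a + b).choose a * (E i).card := by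
    intro i
    exact bollobas_key a b n (A' i) (B' i) (hA' i) (hB' i) (hdisj' i) (E i)
      (fun f hf => Finset.mem_filter.mpr ⟨Finset.mem_univ _, hf⟩)
  have hsum : ∑ i : ι, (E i).card ≤ Fintype.card ({x // x ∈ U} ↪ Fin n) := by
    rw [← Finset.card_biUnion hEdisj, ← Finset.card_univ]
    exact Finset.card_le_card (Finset.subset_univ _)
  have hpos : 0 < Fintype.card ({x // x ∈ U} ↪ Fin n) := by
    rw [Fintype.card_pos_iff]
    exact ⟨(Fintype.equivFinOfCardEq (by rw [Fintype.card_coe])).toEmbedding⟩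
  have hmain : Fintype.card ι * Fintype.card ({x // x ∈ U} ↪ Fin n)
      ≤ (a + b).choose a * Fintype.card ({x // x ∈ U} ↪ Fin n) := by
    calc Fintype.card ι * Fintype.card ({x // x ∈ U} ↪ Fin n)
        = ∑ _i : ι, Fintype.card ({x // x ∈ U} ↪ Fin n) := by
          rw [Finset.sum_const, Finset.card_univ, smul_eq_mul]
      _ ≤ ∑ i : ι, (a + b).choose a * (E i).card := Finset.sum_le_sum fun i _ => hkey i
      _ = (a + b).choose a * ∑ i : ι, (E i).card := by rw [Finset.mul_sum]
      _ ≤ (a + b).choose a * Fintype.card ({x // x ∈ U} ↪ Fin n) :=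
          Nat.mul_le_mul_left _ hsum
  exact Nat.le_of_mul_le_mul_right hmain hpos
end

section
/- Let $A$ and $B$ be families of $k$-element subsets of $\{1, \ldots, n\}$, and let $I$ be a nonempty proper subset of $\{0, 1, \ldots, k-1\}$. Suppose that for all $a_1, a_2 \in A$ with $a_1 \ne a_2$ we have $|a_1 \cap a_2| \in I$, and for all $b_1, b_2 \in B$ with $b_1 \ne b_2$ we have $|b_1 \cap b_2| \in \{0, \ldots, k-1\} \setminus I$. Then $|A| \cdot |B| \le \binom{n}{k}$. -/
open Finset

lemma exists_perm_image {n : ℕ} (a b : Finset (Fin n)) (h : a.card = b.card) :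
    ∃ g : Equiv.Perm (Fin n), a.image g = b := by
  classical
  have e : {x // x ∈ a} ≃ {x // x ∈ b} := Finset.equivOfCardEq h
  refine ⟨e.extendSubtype, ?_⟩
  apply Finset.eq_of_subset_of_card_le
  · intro x hx
    obtain ⟨y, hy, rfl⟩ := Finset.mem_image.mp hx
    exact e.extendSubtype_mem y hy
  · rw [Finset.card_image_of_injective _ e.extendSubtype.injective, h]

noncomputable def Njs {n : ℕ} (a b : Finset (Fin n)) : ℕ :=
  (Finset.univ.filter (fun g : Equiv.Perm (Fin n) => a.image g = b)).card

lemma Njs_const {n k : ℕ} (a b a' b' : Finset (Fin n))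
    (ha : a.card = k) (hb : b.card = k) (ha' : a'.card = k) (hb' : b'.card = k) :
    Njs a b = Njs a' b' := by
  classical
  obtain ⟨g₁, hg₁⟩ := exists_perm_image a a' (ha.trans ha'.symm)
  obtain ⟨g₂, hg₂⟩ := exists_perm_image b b' (hb.trans hb'.symm)
  unfold Njs
  apply Finset.card_bij' (fun g _ => g₂ * g * g₁⁻¹) (fun g _ => g₂⁻¹ * g * g₁)
  · intro g hg
    simp only [Finset.mem_filter, Finset.mem_univ, true_and] at hg ⊢
    subst hg₁ hg₂
    simp only [Finset.image_image, Function.comp_def, Equiv.Perm.mul_apply,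
      Equiv.Perm.inv_def, Equiv.symm_apply_apply, Equiv.apply_symm_apply]
    rw [show (fun x => g₂ (g x)) = ⇑g₂ ∘ ⇑g from rfl, ← Finset.image_image, hg]
  · intro g hg
    simp only [Finset.mem_filter, Finset.mem_univ, true_and] at hg ⊢
    rw [← hg₁] at hg
    rw [← hg₂] at hg
    simp only [Finset.image_image, Function.comp_def, Equiv.Perm.mul_apply] at hg
    show Finset.image (⇑(g₂⁻¹ * g * g₁)) a = b
    have h2 : ⇑(g₂⁻¹ * g * g₁) = ⇑g₂⁻¹ ∘ (fun x => g (g₁ x)) := rfl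
    rw [h2, ← Finset.image_image, hg, Finset.image_image]
    have h3 : ⇑g₂⁻¹ ∘ ⇑g₂ = id := by ext x; simp
    rw [h3, Finset.image_id]
  · intro g _; group
  · intro g _; group

/-- Clique-coclique bound in the Johnson scheme. -/
theorem clique_coclique_johnson (n k : ℕ)
    (A B : Finset (Finset (Fin n))) (I : Finset ℕ)
    (hI : I ⊆ Finset.range k) (hIne : I.Nonempty) (hIprop : I ≠ Finset.range k)
    (hAk : ∀ a ∈ A, a.card = k) (hBk : ∀ b ∈ B, b.card = k)
    (hA : ∀ a₁ ∈ A, ∀ a₂ ∈ A, a₁ ≠ a₂ → (a₁ ∩ a₂).card ∈ I)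
    (hB : ∀ b₁ ∈ B, ∀ b₂ ∈ B, b₁ ≠ b₂ → (b₁ ∩ b₂).card ∈ Finset.range k \ I) :
    A.card * B.card ≤ n.choose k := by
  rcases A.eq_empty_or_nonempty with rfl | ⟨a₀, ha₀⟩
  · simp
  rcases B.eq_empty_or_nonempty with rfl | ⟨b₀, hb₀⟩
  · simp
  set c := Njs a₀ b₀ with hc
  have hca := hAk a₀ ha₀
  have hcb := hBk b₀ hb₀
  have hcpos : 0 < c := by
    obtain ⟨g, hg⟩ := exists_perm_image a₀ b₀ (hca.trans hcb.symm)
    rw [hc]; unfold Njs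
    exact Finset.card_pos.mpr ⟨g, by simp [hg]⟩
  have htotal : ((Finset.univ : Finset (Equiv.Perm (Fin n))).card) = n.choose k * c := by
    have hfib := Finset.card_eq_sum_card_fiberwise
      (f := fun g : Equiv.Perm (Fin n) => a₀.image g)
      (s := Finset.univ) (t := Finset.univ.powersetCard k)
      (fun g _ => Finset.mem_powersetCard_univ.mpr
        (by rw [Finset.card_image_of_injective _ g.injective]; exact hca))
    rw [hfib, Finset.sum_congr rfl (fun b hb =>
        show (Finset.univ.filter fun g : Equiv.Perm (Fin n) => a₀.image g = b).card = c from
        Njs_const a₀ b a₀ b₀ hca (Finset.mem_powersetCard_univ.mp hb) hca hcb),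
      Finset.sum_const, smul_eq_mul, Finset.card_powersetCard, Finset.card_univ,
      Fintype.card_fin]
  have key : ∀ g : Equiv.Perm (Fin n),
      ((A ×ˢ B).filter fun q => q.1.image g = q.2).card ≤ 1 := by
    intro g
    apply Finset.card_le_one.mpr
    rintro ⟨a₁, b₁⟩ h1 ⟨a₂, b₂⟩ h2
    simp only [Finset.mem_filter, Finset.mem_product] at h1 h2
    obtain ⟨⟨ha₁, hb₁⟩, he₁⟩ := h1
    obtain ⟨⟨ha₂, hb₂⟩, he₂⟩ := h2
    by_cases haa : a₁ = a₂
    · subst haa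
      have : b₁ = b₂ := by rw [← he₁, ← he₂]
      rw [this]
    · exfalso
      have hbb : b₁ ≠ b₂ := by
        rw [← he₁, ← he₂]
        intro h
        exact haa (Finset.image_injective g.injective h)
      have hmem1 := hA a₁ ha₁ a₂ ha₂ haa
      have hmem2 := hB b₁ hb₁ b₂ hb₂ hbb
      have hcard : (b₁ ∩ b₂).card = (a₁ ∩ a₂).card := by
        rw [← he₁, ← he₂, ← Finset.image_inter _ _ g.injective,
          Finset.card_image_of_injective _ g.injective]
      rw [hcard] at hmem2
      exact (Finset.mem_sdiff.mp hmem2).2 hmem1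
  have hdc : A.card * B.card * c ≤ (Finset.univ : Finset (Equiv.Perm (Fin n))).card := by
    have h1 : ∑ q ∈ A ×ˢ B, Njs q.1 q.2 = A.card * B.card * c := by
      rw [Finset.sum_congr rfl (fun q hq => Njs_const q.1 q.2 a₀ b₀
          (hAk _ (Finset.mem_product.mp hq).1) (hBk _ (Finset.mem_product.mp hq).2) hca hcb),
        Finset.sum_const, smul_eq_mul, Finset.card_product]
    have h2 : ∑ q ∈ A ×ˢ B, Njs q.1 q.2
        = ∑ g : Equiv.Perm (Fin n), ((A ×ˢ B).filter fun q => q.1.image g = q.2).card := by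
      simp only [Njs, Finset.card_filter]
      rw [Finset.sum_comm]
    calc A.card * B.card * c = ∑ q ∈ A ×ˢ B, Njs q.1 q.2 := h1.symm
      _ = ∑ g : Equiv.Perm (Fin n), ((A ×ˢ B).filter fun q => q.1.image g = q.2).card := h2
      _ ≤ ∑ _g : Equiv.Perm (Fin n), 1 := Finset.sum_le_sum (fun g _ => key g)
      _ = (Finset.univ : Finset (Equiv.Perm (Fin n))).card := by simp
  rw [htotal] at hdc
  exact Nat.le_of_mul_le_mul_right hdc hcpos
end

section
/- For every finite field $F$ and every $n \ge 1$, the vector space $F^n$ admits a compatible total ordering, i.e., a linear order such that for any two subspaces $U, W$ of the same dimension, the unique order-preserving bijection from $U$ to $W$ is linear. In particular, the lexicographic order induced by any total order on $F$ is compatible. -/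
open Function Module

section Aux

variable {F : Type*} [Field F] [LinearOrder F] {n : ℕ}

set_option linter.unusedSectionVars false in
private lemma lex_lt_def {ι : Type*} [LinearOrder ι] (x y : ι → F) :
    toLex x < toLex y ↔ ∃ i, (∀ j, j < i → x j = y j) ∧ x i < y i := Iff.rfl

set_option linter.unusedSectionVars false in
private lemma exists_lead {u : Fin n → F} (hu : u ≠ 0) :
    ∃ i, (∀ j, j < i → u j = 0) ∧ u i ≠ 0 := by
  have hne : {i : Fin n | u i ≠ 0}.Nonempty := by
    rcases Function.ne_iff.1 hu with ⟨i, hi⟩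
    exact ⟨i, by simpa using hi⟩
  obtain ⟨i, hi, hmin⟩ :=
    (IsWellFounded.wf (r := ((· < ·) : Fin n → Fin n → Prop))).has_min _ hne
  exact ⟨i, fun j hj => by by_contra h; exact hmin j h hj, hi⟩

open scoped Classical in
private noncomputable def pivots (U : Submodule F (Fin n → F)) : Finset (Fin n) :=
  Finset.univ.filter fun i => ∃ u ∈ U, (∀ j, j < i → u j = 0) ∧ u i ≠ 0

set_option linter.unusedSectionVars false in
private lemma mem_pivots {U : Submodule F (Fin n → F)} {i : Fin n} :
    i ∈ pivots U ↔ ∃ u ∈ U, (∀ j, j < i → u j = 0) ∧ u i ≠ 0 := by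
  classical simp [pivots]

private lemma exists_lex_linearEquiv (U : Submodule F (Fin n → F)) (d : ℕ)
    (hd : finrank F U = d) :
    ∃ e : U ≃ₗ[F] (Fin d → F),
      ∀ u v : U, toLex (u : Fin n → F) < toLex (v : Fin n → F) →
        toLex (e u) < toLex (e v) := by
  classical
  set S := pivots U with hSdef
  let π : U →ₗ[F] (↥S → F) :=
    (LinearMap.funLeft F F (fun s : ↥S => (s : Fin n))).comp U.subtype
  have hπ : ∀ (u : U) (s : ↥S), π u s = (u : Fin n → F) (s : Fin n) := fun _ _ => rfl
  have hker : ∀ u : U, π u = 0 → u = 0 := by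
    intro u hu
    by_contra hne
    have hval : (u : Fin n → F) ≠ 0 := fun h => hne (Subtype.ext h)
    obtain ⟨i, hzero, hi⟩ := exists_lead hval
    have hiS : i ∈ S := mem_pivots.2 ⟨u, u.2, hzero, hi⟩
    exact hi (by simpa [hπ] using congrFun hu ⟨i, hiS⟩)
  have hinj : Injective π := LinearMap.ker_eq_bot.1 (LinearMap.ker_eq_bot'.2 hker)
  have hcard : S.card ≤ finrank F U := by
    choose g hgU hg0 hgne using fun s : ↥S => mem_pivots.1 s.2
    have hli : LinearIndependent F (fun s : ↥S => (⟨g s, hgU s⟩ : U)) := by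
      rw [linearIndependent_iff']
      intro t c hsum s hs
      by_contra hcs
      set t' := t.filter (fun s => c s ≠ 0) with ht'
      have ht'ne : t'.Nonempty := ⟨s, Finset.mem_filter.2 ⟨hs, hcs⟩⟩
      set s0 := t'.min' ht'ne with hs0
      have hs0t' : s0 ∈ t' := t'.min'_mem ht'ne
      have hs0t : s0 ∈ t := (Finset.mem_filter.1 hs0t').1
      have hcs0 : c s0 ≠ 0 := (Finset.mem_filter.1 hs0t').2
      have hev : (∑ i ∈ t, c i • (⟨g i, hgU i⟩ : U) : U).val (s0 : Fin n) = 0 := by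
        rw [hsum]; rfl
      rw [Submodule.coe_sum] at hev
      simp only [SetLike.val_smul, Finset.sum_apply, Pi.smul_apply, smul_eq_mul] at hev
      rw [Finset.sum_eq_single s0] at hev
      · exact hcs0 (by
          rcases mul_eq_zero.1 hev with h | h
          · exact h
          · exact absurd h (hgne s0))
      · intro b hb hbne
        by_cases hcb : c b = 0
        · simp [hcb]
        · have hbt' : b ∈ t' := Finset.mem_filter.2 ⟨hb, hcb⟩
          have h1 : s0 < b := lt_of_le_of_ne (t'.min'_le b hbt') (Ne.symm hbne)
          have h2 : (s0 : Fin n) < (b : Fin n) := h1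
          rw [hg0 b _ h2, mul_zero]
      · intro h; exact absurd hs0t h
    simpa using hli.fintype_card_le_finrank
  have hrankS : finrank F (↥S → F) = S.card := by
    simp [finrank_pi]
  have hcard' : finrank F U = S.card := by
    refine le_antisymm ?_ hcard
    have := LinearMap.finrank_le_finrank_of_injective hinj
    simpa [hrankS] using this
  have hsurj : Surjective π :=
    (LinearMap.injective_iff_surjective_of_finrank_eq_finrank
      (by rw [hcard', hrankS])).1 hinj
  let e1 : U ≃ₗ[F] (↥S → F) := LinearEquiv.ofBijective π ⟨hinj, hsurj⟩
  have hScard : S.card = d := by rw [← hcard', hd]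
  let σ : Fin d ≃o ↥S := S.orderIsoOfFin hScard
  let e2 : (↥S → F) ≃ₗ[F] (Fin d → F) := LinearEquiv.funCongrLeft F F σ.toEquiv
  refine ⟨e1.trans e2, ?_⟩
  intro u v huv
  obtain ⟨i, hlt, hi⟩ := (lex_lt_def _ _).1 huv
  have hiS : i ∈ S := mem_pivots.2 ⟨(u : Fin n → F) - (v : Fin n → F),
    sub_mem u.2 v.2, fun j hj => by simp [hlt j hj], by simpa [sub_eq_zero] using hi.ne⟩
  have happ : ∀ (w : U) (j : Fin d),
      (e1.trans e2) w j = (w : Fin n → F) ((σ j : Fin n)) := fun _ _ => rfl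
  refine (lex_lt_def _ _).2 ⟨σ.symm ⟨i, hiS⟩, ?_, ?_⟩
  · intro j hj
    rw [happ, happ]
    apply hlt
    have h3 : σ j < (⟨i, hiS⟩ : ↥S) := by
      have := σ.strictMono hj
      rwa [OrderIso.apply_symm_apply] at this
    exact h3
  · rw [happ, happ, OrderIso.apply_symm_apply]
    exact hi

end Aux

/-- Every finite vector space `F^n` admits a compatible total ordering:
a linear order such that for any two subspaces of the same dimension, the
unique order-preserving bijection between them is linear. -/
theorem exists_compatible_ordering (F : Type*) [Field F] [Fintype F] (n : ℕ) :
    ∃ lo : LinearOrder (Fin n → F),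
      ∀ (U W : Submodule F (Fin n → F)),
        Module.finrank F U = Module.finrank F W →
        ∀ f : U → W, Function.Bijective f →
          (∀ u v : U, lo.lt u.val v.val → lo.lt (f u).val (f v).val) →
          (∀ u v : U, ((f (u + v) : W) : Fin n → F) = (f u : Fin n → F) + (f v : Fin n → F)) ∧
          (∀ (c : F) (u : U), ((f (c • u) : W) : Fin n → F) = c • ((f u : W) : Fin n → F)) := by
  classical
  letI : LinearOrder F := LinearOrder.lift' (Fintype.equivFin F) (Fintype.equivFin F).injective
  letI : WellFoundedLT (Fin n) := inferInstance
  letI loLex : LinearOrder (Lex (Fin n → F)) := inferInstance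
  refine ⟨loLex, ?_⟩
  intro U W hdim f hbij hmono
  set d := Module.finrank F ↥U with hdU
  obtain ⟨eU, heU⟩ := exists_lex_linearEquiv U d rfl
  obtain ⟨eW, heW⟩ := exists_lex_linearEquiv W d hdim.symm
  letI : WellFoundedLT (Fin d) := inferInstance
  letI loLexd : LinearOrder (Lex (Fin d → F)) := inferInstance
  haveI : Finite (Lex (Fin d → F)) := (inferInstance : Finite (Fin d → F))
  letI : WellFoundedLT (Lex (Fin d → F)) := Finite.to_wellFoundedLT
  have heU' : ∀ u u' : U, toLex (eU u) < toLex (eU u') →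
      toLex ((u : Fin n → F)) < toLex ((u' : Fin n → F)) := by
    intro u u' h
    rcases lt_trichotomy (toLex ((u : Fin n → F))) (toLex ((u' : Fin n → F))) with h' | h' | h'
    · exact h'
    · have huu : u = u' := Subtype.ext (toLex.injective h')
      subst huu; exact absurd h (lt_irrefl _)
    · exact absurd (heU _ _ h') (lt_asymm h)
  let φ : Lex (Fin d → F) → Lex (Fin d → F) :=
    fun x => toLex (eW (f (eU.symm (ofLex x))))
  have hφs : StrictMono φ := by
    intro x y hxy
    have h1 : toLex ((eU.symm (ofLex x) : U) : Fin n → F) <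
        toLex ((eU.symm (ofLex y) : U) : Fin n → F) := by
      apply heU'
      rw [eU.apply_symm_apply, eU.apply_symm_apply]
      exact hxy
    have h2 := hmono _ _ h1
    exact heW _ _ h2
  have hφsurj : Function.Surjective φ := by
    intro y
    obtain ⟨w, hw⟩ := hbij.2 (eW.symm (ofLex y))
    refine ⟨toLex (eU w), ?_⟩
    show toLex (eW (f (eU.symm (ofLex (toLex (eU w)))))) = y
    rw [ofLex_toLex, eU.symm_apply_apply, hw, eW.apply_symm_apply, toLex_ofLex]
  have hφ : ∀ x, φ x = x := by
    have h1 : StrictMono.orderIsoOfSurjective φ hφs hφsurj = OrderIso.refl _ :=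
      Subsingleton.elim _ _
    intro x
    calc φ x = (StrictMono.orderIsoOfSurjective φ hφs hφsurj) x := rfl
      _ = x := by rw [h1]; rfl
  have hfg : ∀ u : U, f u = eW.symm (eU u) := by
    intro u
    have h1 : φ (toLex (eU u)) = toLex (eU u) := hφ _
    have h2 : toLex (eW (f u)) = toLex (eU u) := by
      show toLex (eW (f u)) = toLex (eU u)
      rw [← h1]
      show _ = toLex (eW (f (eU.symm (ofLex (toLex (eU u))))))
      rw [ofLex_toLex, eU.symm_apply_apply]
    have h3 : eW (f u) = eU u := toLex.injective h2
    rw [← h3, eW.symm_apply_apply]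
  constructor
  · intro u v
    rw [hfg (u + v), hfg u, hfg v, map_add, map_add]
    rfl
  · intro c u
    rw [hfg (c • u), hfg u, map_smul, map_smul]
    rfl
end

section
/- Let $G = (V, E)$ be a finite undirected graph and $\lambda : V \to \mathbb{Z}$ with $0 \le \lambda(v) \le \deg(v)$ for all $v$. Then the following are equivalent: (1) for all subsets $A \subseteq V$, $\sum_{v \in A} \lambda(v) \ge |E(G[A])|$, where $E(G[A])$ is the set of edges with both endpoints in $A$; (2) there exists an orientation $o$ of the edges of $G$ such that the in-degree of every vertex $v$ under $o$ is at most $\lambda(v)$. -/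
open Finset

section Aux

variable {V : Type*} [Fintype V] [DecidableEq V]
    (G : SimpleGraph V) [DecidableRel G.Adj] (lam : V → ℤ)

/-- The set of allowed "copies" for an edge in the Hall bipartite graph. -/
private def hallSets (e : {e : Sym2 V // e ∈ G.edgeFinset}) : Finset (V × ℕ) :=
  (univ.filter (· ∈ e.1)).biUnion fun v =>
    (Finset.range (lam v).toNat).image fun k => (v, k)

private lemma mem_hallSets {e : {e : Sym2 V // e ∈ G.edgeFinset}} {p : V × ℕ} :
    p ∈ hallSets G lam e ↔ p.1 ∈ e.1 ∧ p.2 < (lam p.1).toNat := by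
  obtain ⟨v, k⟩ := p
  simp only [hallSets, mem_biUnion, mem_filter, mem_univ, true_and, mem_image,
    mem_range, Prod.mk.injEq]
  constructor
  · rintro ⟨w, hw, k', hk', rfl, rfl⟩; exact ⟨hw, hk'⟩
  · rintro ⟨hv, hk⟩; exact ⟨v, hv, k, hk, rfl, rfl⟩

end Aux

/-- Equivalence between the subset condition and the existence of an
orientation with bounded in-degrees. -/
theorem orientation_iff {V : Type*} [Fintype V] [DecidableEq V]
    (G : SimpleGraph V) [DecidableRel G.Adj] (lam : V → ℤ)
    (hlam : ∀ v, 0 ≤ lam v ∧ lam v ≤ G.degree v) :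
    (∀ A : Finset V,
        ((G.edgeFinset.filter fun e => ∀ x ∈ e, x ∈ A).card : ℤ) ≤ ∑ v ∈ A, lam v) ↔
    (∃ o : V → V → Bool,
        (∀ u v, o u v = true → G.Adj u v) ∧
        (∀ u v, G.Adj u v → (o u v = true ↔ ¬ o v u = true)) ∧
        (∀ v, ((Finset.univ.filter fun u => o u v = true).card : ℤ) ≤ lam v)) := by
  constructor
  · -- Hall's theorem direction
    intro hA
    set ι := {e : Sym2 V // e ∈ G.edgeFinset}
    have hall : ∀ s : Finset ι, s.card ≤ (s.biUnion (hallSets G lam)).card := by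
      intro s
      set A : Finset V := s.biUnion (fun e => univ.filter (· ∈ e.1)) with hAdef
      have hUnion : s.biUnion (hallSets G lam) =
          A.biUnion (fun v => (Finset.range (lam v).toNat).image fun k => (v, k)) := by
        ext ⟨v, k⟩
        simp only [mem_biUnion, mem_hallSets, hAdef, mem_filter, mem_univ, true_and,
          mem_image, mem_range, Prod.mk.injEq]
        constructor
        · rintro ⟨e, he, hv, hk⟩
          exact ⟨v, ⟨e, he, hv⟩, k, hk, rfl, rfl⟩
        · rintro ⟨w, ⟨e, he, hw⟩, k', hk', rfl, rfl⟩
          exact ⟨e, he, hw, hk'⟩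
      have hcard : (s.biUnion (hallSets G lam)).card = ∑ v ∈ A, (lam v).toNat := by
        rw [hUnion, card_biUnion]
        · refine Finset.sum_congr rfl fun v _ => ?_
          rw [Finset.card_image_of_injective _ (fun a b h => by simpa using h),
            Finset.card_range]
        · intro x hx y hy hxy
          apply Finset.disjoint_left.mpr
          rintro ⟨v, k⟩ hv hw
          simp only [mem_image, mem_range] at hv hw
          obtain ⟨k1, _, h1⟩ := hv
          obtain ⟨k2, _, h2⟩ := hw
          rw [Prod.ext_iff] at h1 h2
          exact hxy (h1.1.trans h2.1.symm)
      rw [hcard]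
      -- s injects into the edges of G[A]
      have hsub : s.image Subtype.val ⊆ G.edgeFinset.filter fun e => ∀ x ∈ e, x ∈ A := by
        intro e he
        simp only [mem_image] at he
        obtain ⟨⟨e, heE⟩, hes, rfl⟩ := he
        refine mem_filter.mpr ⟨heE, fun x hx => ?_⟩
        exact mem_biUnion.mpr ⟨⟨e, heE⟩, hes, by simpa using hx⟩
      have h1 : s.card ≤ (G.edgeFinset.filter fun e => ∀ x ∈ e, x ∈ A).card := by
        calc s.card = (s.image Subtype.val).card :=
              (Finset.card_image_of_injective _ Subtype.val_injective).symm
          _ ≤ _ := Finset.card_le_card hsub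
      refine h1.trans ?_
      have := hA A
      have hsum : (∑ v ∈ A, (lam v).toNat : ℤ) = ∑ v ∈ A, lam v := by
        exact Finset.sum_congr rfl fun v _ => Int.toNat_of_nonneg (hlam v).1
      exact_mod_cast this.trans_eq hsum.symm
    obtain ⟨f, hfinj, hft⟩ := (Finset.all_card_le_biUnion_card_iff_exists_injective
      (hallSets G lam)).mp hall
    -- define the orientation
    refine ⟨fun u v => if h : G.Adj u v then
      decide ((f ⟨s(u, v), by simpa using h⟩).1 = v) else false, ?_, ?_, ?_⟩
    · intro u v h
      by_contra hadj
      simp [hadj] at h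
    · intro u v hadj
      have hadj' := hadj.symm
      simp only [dif_pos hadj, dif_pos hadj', decide_eq_true_eq]
      have hswap : (⟨s(v, u), by simpa using hadj'⟩ : {e : Sym2 V // e ∈ G.edgeFinset}) =
          ⟨s(u, v), by simpa using hadj⟩ := by
        apply Subtype.ext; exact Sym2.eq_swap
      rw [hswap]
      have hm := mem_hallSets G lam |>.mp (hft ⟨s(u, v), by simpa using hadj⟩)
      have hmem : (f ⟨s(u, v), by simpa using hadj⟩).1 = u ∨
          (f ⟨s(u, v), by simpa using hadj⟩).1 = v := by
        simpa [Sym2.mem_iff] using hm.1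
      have hne := hadj.ne
      constructor
      · intro h1 h2; rw [h1] at h2; exact hne h2.symm
      · intro h1; rcases hmem with h | h
        · exact absurd h h1
        · exact h
    · intro v
      have key : (univ.filter fun u => (if h : G.Adj u v then
          decide ((f ⟨s(u, v), by simpa using h⟩).1 = v) else false) = true).card
          ≤ (lam v).toNat := by
        classical
        set S := univ.filter fun u => (if h : G.Adj u v then
          decide ((f ⟨s(u, v), by simpa using h⟩).1 = v) else false) = true with hS
        have := Finset.card_le_card_of_injOn
          (f := fun u => if h : G.Adj u v then (f ⟨s(u, v), by simpa using h⟩).2 else 0)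
          (s := S) (t := Finset.range (lam v).toNat) ?_ ?_
        · simpa using this
        · intro u hu
          simp only [hS, Finset.mem_coe, mem_filter, mem_univ, true_and] at hu
          by_cases h : G.Adj u v
          · simp only [dif_pos h] at hu ⊢
            have hm := mem_hallSets G lam |>.mp (hft ⟨s(u, v), by simpa using h⟩)
            rw [Finset.mem_coe, Finset.mem_range]
            have := hm.2
            rwa [(decide_eq_true_eq).mp hu] at this
          · simp [h] at hu
        · intro u1 hu1 u2 hu2 heq
          simp only [hS, Finset.mem_coe, mem_filter, mem_univ, true_and] at hu1 hu2
          by_cases h1 : G.Adj u1 v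
          · by_cases h2 : G.Adj u2 v
            · simp only [dif_pos h1, dif_pos h2, decide_eq_true_eq] at hu1 hu2 heq
              have hfeq : f ⟨s(u1, v), by simpa using h1⟩ = f ⟨s(u2, v), by simpa using h2⟩ := by
                apply Prod.ext
                · rw [hu1, hu2]
                · exact heq
              have := hfinj hfeq
              have hsym : s(u1, v) = s(u2, v) := congrArg Subtype.val this
              rcases Sym2.eq_iff.mp hsym with ⟨h, _⟩ | ⟨h, h'⟩
              · exact h
              · rw [h, h']
            · simp [h2] at hu2
          · simp [h1] at hu1
      calc ((univ.filter fun u => _).card : ℤ) ≤ ((lam v).toNat : ℤ) := by exact_mod_cast key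
        _ = lam v := Int.toNat_of_nonneg (hlam v).1
  · -- easy direction
    rintro ⟨o, ho1, ho2, ho3⟩ A
    -- pairs (u,v) with v ∈ A and o u v = true
    set S : Finset (V × V) :=
      A.biUnion (fun v => (univ.filter fun u => o u v = true).image fun u => (u, v)) with hSdef
    have hScard : S.card = ∑ v ∈ A, (univ.filter fun u => o u v = true).card := by
      rw [hSdef, card_biUnion]
      · exact Finset.sum_congr rfl fun v _ =>
          Finset.card_image_of_injective _ (fun a b h => by simpa using h)
      · intro x hx y hy hxy
        apply Finset.disjoint_left.mpr
        rintro ⟨u, v⟩ hv hw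
        simp only [mem_image, mem_filter] at hv hw
        obtain ⟨u1, _, h1⟩ := hv
        obtain ⟨u2, _, h2⟩ := hw
        rw [Prod.ext_iff] at h1 h2
        exact hxy (h1.2.trans h2.2.symm)
    have hsurj : Set.SurjOn (fun p : V × V => s(p.1, p.2)) ↑S
        ↑(G.edgeFinset.filter fun e => ∀ x ∈ e, x ∈ A) := by
      intro e he
      simp only [Finset.coe_filter, Set.mem_setOf_eq, SimpleGraph.mem_edgeFinset] at he
      obtain ⟨heE, hendA⟩ := he
      induction e with
      | _ u v =>
        have hadj : G.Adj u v := heE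
        have huA : u ∈ A := hendA u (by simp)
        have hvA : v ∈ A := hendA v (by simp)
        by_cases h : o u v = true
        · refine ⟨(u, v), ?_, rfl⟩
          simp only [hSdef, Finset.coe_biUnion, Set.mem_iUnion]
          exact ⟨v, hvA, by simp [h]⟩
        · have h' : o v u = true := by
            by_contra hc
            exact h ((ho2 u v hadj).mpr hc)
          refine ⟨(v, u), ?_, Sym2.eq_swap⟩
          simp only [hSdef, Finset.coe_biUnion, Set.mem_iUnion]
          exact ⟨u, huA, by simp [h']⟩
    have h1 : (G.edgeFinset.filter fun e => ∀ x ∈ e, x ∈ A).card ≤ S.card :=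
      Finset.card_le_card_of_surjOn _ hsurj
    calc ((G.edgeFinset.filter fun e => ∀ x ∈ e, x ∈ A).card : ℤ) ≤ (S.card : ℤ) := by
          exact_mod_cast h1
      _ = ∑ v ∈ A, ((univ.filter fun u => o u v = true).card : ℤ) := by
          rw [hScard]; push_cast; rfl
      _ ≤ ∑ v ∈ A, lam v := Finset.sum_le_sum fun v _ => ho3 v
end
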